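/- arXiv:1901.07515 — 3 statements merged into one kernel-verified Lean document; each statement's English description precedes it below -/
import Mathlib

section
/- For every n ≥ 1 and x ∈ [0,1], the normalized fourth absolute central binomial moment satisfies n^{-4} ∑_{k=0}^{n} |k - n x|^4 C(n,k) x^k (1-x)^{n-k} ≤ 4 δ_n(x)^2 Δ_n(x)^2, where δ_n(x) = √(x(1-x)/n) and Δ_n(x) = max{1/n, δ_n(x)}. -/
/-!
Expanding `(k - n x) ^ 4` in the falling factorials `k (k - 1) ⋯ (k - j + 1)` reduces the sum to
the factorial moments `∑ₖ k^{(j)} p_{n,k}(x) = n^{(j)} x^j`, which give the fourth central moment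
`n q + 3 n (n - 2) q ^ 2` with `q = x (1 - x)`. Divided by `n ^ 4` this is
`δ² (1/n)² + 3 δ⁴ - 6 δ⁴ / n ≤ δ² Δ² + 3 δ² Δ²`.
-/

open Finset

theorem Nat.descFactorial_mul_choose {n k j : ℕ} (hjk : j ≤ k) :
    k.descFactorial j * n.choose k = n.descFactorial j * (n - j).choose (k - j) := by
  rw [descFactorial_eq_factorial_mul_choose, descFactorial_eq_factorial_mul_choose, mul_assoc,
    mul_assoc, mul_comm (k.choose j), Nat.choose_mul hjk]

theorem Nat.cast_descFactorial_eq_prod_range {R : Type*} [CommRing R] (k j : ℕ) :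
    (k.descFactorial j : R) = ∏ i ∈ range j, ((k : R) - i) := by
  rw [← descPochhammer_eval_eq_descFactorial, descPochhammer_eval_eq_prod_range]

variable {R : Type*} [CommRing R]

theorem sum_descFactorial_mul_binomial (n j : ℕ) (x : R) :
    ∑ k ∈ range (n + 1), (k.descFactorial j : R) * n.choose k * x ^ k * (1 - x) ^ (n - k)
      = n.descFactorial j * x ^ j := by
  rcases lt_or_ge n j with hnj | hjn
  · rw [Nat.descFactorial_eq_zero_iff_lt.mpr hnj, Nat.cast_zero, zero_mul]
    refine sum_eq_zero fun k hk ↦ ?_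
    rw [Nat.descFactorial_eq_zero_iff_lt.mpr (by grind)]
    simp
  obtain ⟨m, rfl⟩ := Nat.exists_eq_add_of_le hjn
  rw [show j + m + 1 = j + (m + 1) by ring, sum_range_add,
    sum_eq_zero fun k hk ↦ by simp [Nat.descFactorial_eq_zero_iff_lt.mpr (mem_range.mp hk)],
    zero_add]
  have hshift : ∀ i ∈ range (m + 1),
      ((j + i).descFactorial j : R) * (j + m).choose (j + i) * x ^ (j + i)
          * (1 - x) ^ (j + m - (j + i))
        = (j + m).descFactorial j * x ^ j * (x ^ i * (1 - x) ^ (m - i) * m.choose i) := by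
    intro i _
    have h := congrArg (Nat.cast (R := R))
      (Nat.descFactorial_mul_choose (n := j + m) (Nat.le_add_right j i))
    push_cast at h
    simp only [Nat.add_sub_cancel_left, Nat.add_sub_add_left] at h ⊢
    rw [pow_add]
    linear_combination x ^ j * x ^ i * (1 - x) ^ (m - i) * h
  rw [sum_congr rfl hshift, ← mul_sum, ← add_pow, add_sub_cancel, one_pow, mul_one]

theorem sum_sub_pow_four_mul_binomial (n : ℕ) (x : R) :
    ∑ k ∈ range (n + 1), ((k : R) - n * x) ^ 4 * n.choose k * x ^ k * (1 - x) ^ (n - k)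
      = n * (x * (1 - x)) + 3 * n * (n - 2) * (x * (1 - x)) ^ 2 := by
  set c : R := n * x
  let a : Fin 5 → R :=
    ![c ^ 4, 1 - 4 * c + 6 * c ^ 2 - 4 * c ^ 3, 7 - 12 * c + 6 * c ^ 2, 6 - 4 * c, 1]
  have hexpand (k : ℕ) : ((k : R) - c) ^ 4 = ∑ j : Fin 5, a j * k.descFactorial j := by
    simp [a, Fin.sum_univ_five, Nat.cast_descFactorial_eq_prod_range, prod_range_succ]
    ring
  simp_rw [hexpand, sum_mul]
  rw [sum_comm]
  simp_rw [mul_assoc (a _), ← mul_sum, sum_descFactorial_mul_binomial]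
  simp [a, Fin.sum_univ_five, Nat.cast_descFactorial_eq_prod_range, prod_range_succ, c]
  ring

/-- Normalized fourth absolute central binomial moment bound:
`n⁻⁴ ∑_k |k - n x|⁴ p_{n,k}(x) ≤ 4 δ_n(x)² Δ_n(x)²`, where
`δ_n(x) = √(x(1-x)/n)` and `Δ_n(x) = max (1/n) (δ_n(x))`. -/
theorem binomial_fourth_abs_moment_bound (n : ℕ) (hn : 1 ≤ n) (x : ℝ)
    (hx : x ∈ Set.Icc (0:ℝ) 1) :
    (∑ k ∈ Finset.range (n + 1),
        |(k : ℝ) - n * x| ^ 4 * (n.choose k : ℝ) * x ^ k * (1 - x) ^ (n - k)) / (n : ℝ) ^ 4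
      ≤ 4 * (Real.sqrt (x * (1 - x) / n)) ^ 2 *
          (max (1 / (n : ℝ)) (Real.sqrt (x * (1 - x) / n))) ^ 2 := by
  have hn0 : (n : ℝ) ≠ 0 := Nat.cast_ne_zero.mpr (by omega)
  set q := x * (1 - x)
  set s := √(q / n)
  set M := max (1 / (n : ℝ)) s
  have hq : 0 ≤ q := mul_nonneg hx.1 (sub_nonneg.mpr hx.2)
  have hs2 : s ^ 2 = q / n := Real.sq_sqrt (div_nonneg hq n.cast_nonneg)
  calc _ = s ^ 2 * (1 / n) ^ 2 + 3 * s ^ 2 * s ^ 2 - 6 * s ^ 2 * s ^ 2 * (1 / n) := by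
        simp_rw [Even.pow_abs (by decide : Even 4), sum_sub_pow_four_mul_binomial, hs2]
        field_simp
        ring
    _ ≤ s ^ 2 * (1 / n) ^ 2 + 3 * s ^ 2 * s ^ 2 := by
      have : 0 ≤ 6 * s ^ 2 * s ^ 2 * (1 / (n : ℝ)) := by positivity
      linarith
    _ ≤ s ^ 2 * M ^ 2 + 3 * s ^ 2 * M ^ 2 := by
      gcongr
      exacts [le_max_left _ _, le_max_right _ _]
    _ = 4 * s ^ 2 * M ^ 2 := by ring
end

section
/- Let f be a continuous function on [0,1] with modulus of continuity ω(f,h) = sup_{|s-t|≤h} |f(s)-f(t)|. Then for all x ∈ [0,1] and n ≥ 1, the Bernstein polynomial B_n f(x) = ∑_{k=0}^{n} f(k/n) C(n,k) x^k (1-x)^{n-k} satisfies |f(x) - B_n f(x)| ≤ 2 ω(f, δ_n(x)), where δ_n(x) = √(x(1-x)/n). -/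
/-!
Split `[x, k/n]` into `⌈|x - k/n| / δ⌉` steps of length at most `δ`; this gives
`|f x - f (k/n)| ≤ (1 + |x - k/n| / δ) ω(f, δ) ≤ (3/2 + (x - k/n)² / (2δ²)) ω(f, δ)`.
Averaging against the Bernstein weights, which sum to `1` and have variance
`∑ (x - k/n)² p_{n,k}(x) = x(1-x)/n = δ_n(x)²`, yields `|f x - B_n f x| ≤ (3/2 + 1/2) ω(f, δ_n(x))`.
When `δ_n(x) = 0` the zero variance forces every weight with `k/n ≠ x` to vanish, so `B_n f x = f x`.
-/

/-- The modulus of continuity of `f` on `[0,1]`: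
`ω(f,h) = sup { |f s - f t| : s, t ∈ [0,1], |s - t| ≤ h }`. -/
noncomputable def modCont (f : ℝ → ℝ) (h : ℝ) : ℝ :=
  sSup {y : ℝ | ∃ s ∈ Set.Icc (0:ℝ) 1, ∃ t ∈ Set.Icc (0:ℝ) 1, |s - t| ≤ h ∧ y = |f s - f t|}

open Finset Polynomial

lemma modCont_nonneg (f : ℝ → ℝ) (h : ℝ) : 0 ≤ modCont f h :=
  Real.sSup_nonneg fun _ ⟨_, _, _, _, _, hy⟩ => hy ▸ abs_nonneg _

section ModulusOfContinuity

variable {f : ℝ → ℝ}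

lemma le_modCont (hf : ContinuousOn f (Set.Icc 0 1)) {h s t : ℝ}
    (hs : s ∈ Set.Icc (0 : ℝ) 1) (ht : t ∈ Set.Icc (0 : ℝ) 1) (hst : |s - t| ≤ h) :
    |f s - f t| ≤ modCont f h := by
  obtain ⟨M, hM⟩ := isCompact_Icc.exists_bound_of_continuousOn hf
  refine le_csSup ⟨2 * M, ?_⟩ ⟨s, hs, t, ht, hst, rfl⟩
  rintro _ ⟨s', hs', t', ht', -, rfl⟩
  have hs'M := hM s' hs'
  have ht'M := hM t' ht'
  rw [Real.norm_eq_abs] at hs'M ht'M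
  linarith [abs_sub (f s') (f t')]

lemma abs_sub_le_nat_mul_modCont (hf : ContinuousOn f (Set.Icc 0 1)) {δ s t : ℝ} {m : ℕ}
    (hs : s ∈ Set.Icc (0 : ℝ) 1) (ht : t ∈ Set.Icc (0 : ℝ) 1) (hst : |s - t| ≤ m * δ) :
    |f s - f t| ≤ m * modCont f δ := by
  rcases m.eq_zero_or_pos with rfl | hm
  · obtain rfl : s = t := by simpa [sub_eq_zero] using hst
    simp
  have hmR : (0 : ℝ) < m := by exact_mod_cast hm
  set u : ℕ → ℝ := fun i => t + ((i : ℝ) / m) • (s - t)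
  have hu : ∀ i ≤ m, u i ∈ Set.Icc (0 : ℝ) 1 := fun i hi =>
    (convex_Icc 0 1).add_smul_sub_mem ht hs
      ⟨by positivity, div_le_one_of_le₀ (by exact_mod_cast hi) hmR.le⟩
  have hstep : ∀ i < m, |f (u i) - f (u (i + 1))| ≤ modCont f δ := fun i hi => by
    refine le_modCont hf (hu i hi.le) (hu (i + 1) hi) ?_
    have hdiff : u i - u (i + 1) = -((s - t) / m) := by
      simp only [u, smul_eq_mul]; push_cast; ring
    rw [hdiff, abs_neg, abs_div, abs_of_pos hmR, div_le_iff₀ hmR]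
    linarith
  have hu0 : u 0 = t := by simp [u]
  have hum : u m = s := by simp [u, hmR.ne']
  calc |f s - f t| = dist (f (u 0)) (f (u m)) := by rw [hu0, hum, Real.dist_eq, abs_sub_comm]
    _ ≤ ∑ i ∈ range m, dist (f (u i)) (f (u (i + 1))) :=
        dist_le_range_sum_dist (fun i => f (u i)) m
    _ ≤ ∑ _i ∈ range m, modCont f δ := sum_le_sum fun i hi => hstep i (mem_range.mp hi)
    _ = m * modCont f δ := by simp

lemma abs_sub_le_one_add_div_mul_modCont (hf : ContinuousOn f (Set.Icc 0 1)) {δ s t : ℝ}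
    (hδ : 0 < δ) (hs : s ∈ Set.Icc (0 : ℝ) 1) (ht : t ∈ Set.Icc (0 : ℝ) 1) :
    |f s - f t| ≤ (1 + |s - t| / δ) * modCont f δ := by
  have hceil := Nat.ceil_lt_add_one (div_nonneg (abs_nonneg (s - t)) hδ.le)
  calc |f s - f t| ≤ ⌈|s - t| / δ⌉₊ * modCont f δ :=
        abs_sub_le_nat_mul_modCont hf hs ht ((div_le_iff₀ hδ).mp (Nat.le_ceil _))
    _ ≤ (1 + |s - t| / δ) * modCont f δ :=
        mul_le_mul_of_nonneg_right (by linarith) (modCont_nonneg f δ)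

lemma abs_sub_le_quadratic_mul_modCont (hf : ContinuousOn f (Set.Icc 0 1)) {δ s t : ℝ}
    (hδ : 0 < δ) (hs : s ∈ Set.Icc (0 : ℝ) 1) (ht : t ∈ Set.Icc (0 : ℝ) 1) :
    |f s - f t| ≤ (3 / 2 + (s - t) ^ 2 / (2 * δ ^ 2)) * modCont f δ := by
  refine (abs_sub_le_one_add_div_mul_modCont hf hδ hs ht).trans
    (mul_le_mul_of_nonneg_right ?_ (modCont_nonneg f δ))
  have hamgm := two_mul_le_add_sq (|s - t| / δ) 1
  rw [div_pow, sq_abs] at hamgm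
  have hsplit : (s - t) ^ 2 / (2 * δ ^ 2) = (s - t) ^ 2 / δ ^ 2 / 2 := by ring
  linarith

end ModulusOfContinuity

section Bernstein

variable (n : ℕ)

lemma eval_bernsteinPolynomial (x : ℝ) (k : ℕ) :
    (bernsteinPolynomial ℝ n k).eval x = n.choose k * x ^ k * (1 - x) ^ (n - k) := by
  simp [bernsteinPolynomial]

lemma eval_bernsteinPolynomial_nonneg {x : ℝ} (hx : x ∈ Set.Icc (0 : ℝ) 1) (k : ℕ) :
    0 ≤ (bernsteinPolynomial ℝ n k).eval x := by
  have := hx.1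
  have := sub_nonneg.mpr hx.2
  rw [eval_bernsteinPolynomial]
  positivity

lemma sum_eval_bernsteinPolynomial (x : ℝ) :
    ∑ k ∈ range (n + 1), (bernsteinPolynomial ℝ n k).eval x = 1 := by
  simpa [eval_finsetSum] using congr_arg (eval x) (bernsteinPolynomial.sum ℝ n)

lemma sum_sq_sub_mul_eval_bernsteinPolynomial (hn : n ≠ 0) (x : ℝ) :
    ∑ k ∈ range (n + 1), (x - k / n) ^ 2 * (bernsteinPolynomial ℝ n k).eval x
      = x * (1 - x) / n := by
  have hvar := congr_arg (eval x) (bernsteinPolynomial.variance ℝ n)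
  simp only [eval_finsetSum, eval_mul, eval_pow, eval_sub, eval_X, eval_natCast,
    eval_one, nsmul_eq_mul] at hvar
  have hnR : (n : ℝ) ≠ 0 := by exact_mod_cast hn
  calc ∑ k ∈ range (n + 1), (x - k / n) ^ 2 * (bernsteinPolynomial ℝ n k).eval x
      = (∑ k ∈ range (n + 1), (n * x - k) ^ 2 * (bernsteinPolynomial ℝ n k).eval x) / n ^ 2 := by
        rw [sum_div]
        refine sum_congr rfl fun k _ => ?_
        field_simp
    _ = x * (1 - x) / n := by
        rw [hvar]
        field_simp

lemma sub_sum_bernstein_eq (f : ℝ → ℝ) (x : ℝ) :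
    f x - ∑ k ∈ range (n + 1), f ((k : ℝ) / n) * (n.choose k : ℝ) * x ^ k * (1 - x) ^ (n - k)
      = ∑ k ∈ range (n + 1), (f x - f ((k : ℝ) / n)) * (bernsteinPolynomial ℝ n k).eval x := by
  simp only [sub_mul, sum_sub_distrib, ← mul_sum, sum_eval_bernsteinPolynomial, mul_one]
  simp only [eval_bernsteinPolynomial, mul_assoc]

lemma div_mem_Icc_of_mem_range {k : ℕ} (hk : k ∈ range (n + 1)) :
    (k : ℝ) / n ∈ Set.Icc (0 : ℝ) 1 :=
  ⟨by positivity, div_le_one_of_le₀ (by exact_mod_cast mem_range_succ_iff.mp hk) n.cast_nonneg⟩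

lemma abs_sum_sub_mul_bernstein_le {f : ℝ → ℝ} (hf : ContinuousOn f (Set.Icc 0 1)) (hn : n ≠ 0)
    {x : ℝ} (hx : x ∈ Set.Icc (0 : ℝ) 1) {δ : ℝ} (hδ : 0 < δ) :
    |∑ k ∈ range (n + 1), (f x - f ((k : ℝ) / n)) * (bernsteinPolynomial ℝ n k).eval x|
      ≤ (3 / 2 + x * (1 - x) / n / (2 * δ ^ 2)) * modCont f δ := by
  set p : ℕ → ℝ := fun k => (bernsteinPolynomial ℝ n k).eval x
  have hp : ∀ k, 0 ≤ p k := eval_bernsteinPolynomial_nonneg n hx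
  calc |∑ k ∈ range (n + 1), (f x - f ((k : ℝ) / n)) * p k|
      ≤ ∑ k ∈ range (n + 1), |f x - f ((k : ℝ) / n)| * p k :=
        (abs_sum_le_sum_abs _ _).trans_eq
          (sum_congr rfl fun k _ => by rw [abs_mul, abs_of_nonneg (hp k)])
    _ ≤ ∑ k ∈ range (n + 1), (3 / 2 + (x - k / n) ^ 2 / (2 * δ ^ 2)) * modCont f δ * p k :=
        sum_le_sum fun k hk => mul_le_mul_of_nonneg_right
          (abs_sub_le_quadratic_mul_modCont hf hδ hx (div_mem_Icc_of_mem_range n hk)) (hp k)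
    _ = (3 / 2 * ∑ k ∈ range (n + 1), p k
          + (∑ k ∈ range (n + 1), (x - k / n) ^ 2 * p k) / (2 * δ ^ 2)) * modCont f δ := by
        rw [mul_sum, sum_div, ← sum_add_distrib, sum_mul]
        exact sum_congr rfl fun k _ => by ring
    _ = (3 / 2 + x * (1 - x) / n / (2 * δ ^ 2)) * modCont f δ := by
        rw [sum_eval_bernsteinPolynomial, sum_sq_sub_mul_eval_bernsteinPolynomial n hn, mul_one]

lemma sum_sub_mul_bernstein_eq_zero (f : ℝ → ℝ) (hn : n ≠ 0) {x : ℝ} (hx : x ∈ Set.Icc (0 : ℝ) 1)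
    (hvar : x * (1 - x) / n = 0) :
    ∑ k ∈ range (n + 1), (f x - f ((k : ℝ) / n)) * (bernsteinPolynomial ℝ n k).eval x = 0 := by
  have hterms := (sum_eq_zero_iff_of_nonneg fun k _ =>
    mul_nonneg (sq_nonneg _) (eval_bernsteinPolynomial_nonneg n hx k)).mp
      ((sum_sq_sub_mul_eval_bernsteinPolynomial n hn x).trans hvar)
  refine sum_eq_zero fun k hk => ?_
  rcases mul_eq_zero.mp (hterms k hk) with hxk | hpk
  · rw [sub_eq_zero.mp (pow_eq_zero_iff two_ne_zero |>.mp hxk), sub_self, zero_mul]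
  · rw [hpk, mul_zero]

end Bernstein

/-- Bernstein polynomial approximation via the modulus of continuity:
`|f(x) - B_n f(x)| ≤ 2 ω(f, δ_n(x))` with `δ_n(x) = √(x(1-x)/n)`. -/
theorem bernstein_modulus_bound (f : ℝ → ℝ) (hf : ContinuousOn f (Set.Icc (0:ℝ) 1))
    (n : ℕ) (hn : 1 ≤ n) (x : ℝ) (hx : x ∈ Set.Icc (0:ℝ) 1) :
    |f x - ∑ k ∈ Finset.range (n + 1),
        f ((k : ℝ) / n) * (n.choose k : ℝ) * x ^ k * (1 - x) ^ (n - k)|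
      ≤ 2 * modCont f (Real.sqrt (x * (1 - x) / n)) := by
  have hn0 : n ≠ 0 := Nat.one_le_iff_ne_zero.mp hn
  rw [sub_sum_bernstein_eq]
  have hvar : 0 ≤ x * (1 - x) / n :=
    div_nonneg (mul_nonneg hx.1 (sub_nonneg.mpr hx.2)) n.cast_nonneg
  rcases hvar.eq_or_lt with hzero | hpos
  · rw [sum_sub_mul_bernstein_eq_zero n f hn0 hx hzero.symm, abs_zero]
    exact mul_nonneg zero_le_two (modCont_nonneg f _)
  · refine (abs_sum_sub_mul_bernstein_le n hf hn0 hx (Real.sqrt_pos.mpr hpos)).trans_eq ?_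
    rw [Real.sq_sqrt hpos.le, div_mul_eq_div_div_swap, div_self hpos.ne']
    norm_num
end

section
/- Let f : [0,1] → ℝ be α-Hölder continuous with constant L, i.e., |f(s)-f(t)| ≤ L|s-t|^α for all s,t ∈ [0,1] with 0 < α ≤ 1. Then for all x ∈ [0,1] and n ≥ 1, |f(x) - B_n f(x)| ≤ 2 L (x(1-x)/n)^{α/2}, where B_n f is the Bernstein polynomial of f. In particular sup_x |f(x) - B_n f(x)| ≤ 2 L (4n)^{-α/2}. -/
/-!
`f(x) - B_n f(x)` is the mean of `f(x) - f(k/n)` under the binomial weights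
`C(n,k) x^k (1-x)^(n-k)`. Hölder continuity bounds it by `L` times the mean of `|x - k/n|^α`,
and Jensen's inequality for the concave map `u ↦ u^(α/2)` bounds that by the `α/2`-th power of
the binomial variance `x(1-x)/n`. This already gives the constant `L`; the uniform bound follows
from `x(1-x) ≤ 1/4`.
-/

open Finset Polynomial

lemma abs_rpow_eq_sq_rpow_half (t α : ℝ) : |t| ^ α = (t ^ 2) ^ (α / 2) := by
  rw [← sq_abs, ← Real.rpow_natCast_mul (abs_nonneg t)]
  congr 1; push_cast; ring

/-- Jensen's inequality for the concave map `u ↦ u ^ (α / 2)` at the points `d i ^ 2`. -/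
lemma sum_mul_abs_rpow_le_rpow_sum_mul_sq {ι : Type*} {s : Finset ι} {w : ι → ℝ}
    (hw₀ : ∀ i ∈ s, 0 ≤ w i) (hw₁ : ∑ i ∈ s, w i = 1) (d : ι → ℝ) {α : ℝ}
    (hα₀ : 0 ≤ α) (hα₂ : α ≤ 2) :
    ∑ i ∈ s, w i * |d i| ^ α ≤ (∑ i ∈ s, w i * d i ^ 2) ^ (α / 2) := by
  simp only [abs_rpow_eq_sq_rpow_half]
  exact (Real.concaveOn_rpow (by positivity) (by linarith)).le_map_sum hw₀ hw₁
    fun i _ => Set.mem_Ici.2 (sq_nonneg (d i))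

namespace bernsteinPolynomial

lemma sum_eval {R : Type*} [CommRing R] (n : ℕ) (x : R) :
    ∑ ν ∈ range (n + 1), (bernsteinPolynomial R n ν).eval x = 1 := by
  rw [← eval_finsetSum, bernsteinPolynomial.sum, eval_one]

lemma eval_nonneg {n ν : ℕ} {x : ℝ} (hx : x ∈ Set.Icc (0 : ℝ) 1) :
    0 ≤ (bernsteinPolynomial ℝ n ν).eval x := by
  obtain ⟨hx₀, hx₁⟩ := hx
  have : 0 ≤ 1 - x := sub_nonneg.2 hx₁
  simp only [bernsteinPolynomial, eval_mul, eval_pow, eval_sub, eval_one, eval_X, eval_natCast]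
  positivity

lemma sum_sq_sub_mul_eval {R : Type*} [Field R] [CharZero R] {n : ℕ} (hn : n ≠ 0) (x : R) :
    ∑ ν ∈ range (n + 1), (x - ν / n) ^ 2 * (bernsteinPolynomial R n ν).eval x
      = x * (1 - x) / n := by
  have h := congrArg (eval x) (bernsteinPolynomial.variance R n)
  simp only [eval_finsetSum, eval_mul, eval_pow, eval_sub, eval_X, eval_natCast,
    eval_one, nsmul_eq_mul] at h
  have hn' : (n : R) ≠ 0 := Nat.cast_ne_zero.2 hn
  calc ∑ ν ∈ range (n + 1), (x - ν / n) ^ 2 * (bernsteinPolynomial R n ν).eval x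
      = (∑ ν ∈ range (n + 1), (n * x - ν) ^ 2 * (bernsteinPolynomial R n ν).eval x) / n ^ 2 := by
        rw [Finset.sum_div]
        refine Finset.sum_congr rfl fun ν _ => ?_
        field_simp
    _ = x * (1 - x) / n := by
        rw [h]
        field_simp

end bernsteinPolynomial

lemma natCast_div_mem_Icc {n ν : ℕ} (hν : ν ∈ range (n + 1)) : (ν / n : ℝ) ∈ Set.Icc (0 : ℝ) 1 :=
  ⟨by positivity, div_le_one_of_le₀ (by exact_mod_cast Finset.mem_range_succ_iff.1 hν) (by positivity)⟩

theorem abs_sub_sum_mul_eval_bernsteinPolynomial_le {f : ℝ → ℝ} {α L : ℝ} (hα₀ : 0 ≤ α)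
    (hα₂ : α ≤ 2) (hL : 0 ≤ L)
    (hf : ∀ s ∈ Set.Icc (0:ℝ) 1, ∀ t ∈ Set.Icc (0:ℝ) 1, |f s - f t| ≤ L * |s - t| ^ α)
    {n : ℕ} (hn : n ≠ 0) {x : ℝ} (hx : x ∈ Set.Icc (0 : ℝ) 1) :
    |f x - ∑ ν ∈ range (n + 1), f (ν / n) * (bernsteinPolynomial ℝ n ν).eval x|
      ≤ L * (x * (1 - x) / n) ^ (α / 2) := by
  set w : ℕ → ℝ := fun ν => (bernsteinPolynomial ℝ n ν).eval x
  have hw₀ : ∀ ν ∈ range (n + 1), 0 ≤ w ν := fun ν _ => bernsteinPolynomial.eval_nonneg hx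
  have hw₁ : ∑ ν ∈ range (n + 1), w ν = 1 := bernsteinPolynomial.sum_eval n x
  calc |f x - ∑ ν ∈ range (n + 1), f (ν / n) * w ν|
      = |∑ ν ∈ range (n + 1), w ν * (f x - f (ν / n))| := by
        simp only [mul_sub, sum_sub_distrib, mul_comm (w _) (f _), ← mul_sum, hw₁, mul_one]
    _ ≤ ∑ ν ∈ range (n + 1), w ν * (L * |x - ν / n| ^ α) := by
        refine (abs_sum_le_sum_abs _ _).trans (sum_le_sum fun ν hν => ?_)
        rw [abs_mul, abs_of_nonneg (hw₀ ν hν)]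
        exact mul_le_mul_of_nonneg_left (hf x hx _ (natCast_div_mem_Icc hν)) (hw₀ ν hν)
    _ = L * ∑ ν ∈ range (n + 1), w ν * |x - ν / n| ^ α := by
        rw [mul_sum]; exact sum_congr rfl fun ν _ => by ring
    _ ≤ L * (∑ ν ∈ range (n + 1), w ν * (x - ν / n) ^ 2) ^ (α / 2) := by
        gcongr
        exact sum_mul_abs_rpow_le_rpow_sum_mul_sq hw₀ hw₁ _ hα₀ hα₂
    _ = L * (x * (1 - x) / n) ^ (α / 2) := by
        simp only [w, mul_comm (eval x _), bernsteinPolynomial.sum_sq_sub_mul_eval hn]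

lemma mul_one_sub_div_rpow_le {x : ℝ} (hx : x ∈ Set.Icc (0 : ℝ) 1) {n : ℕ} (hn : n ≠ 0) {β : ℝ}
    (hβ : 0 ≤ β) : (x * (1 - x) / n) ^ β ≤ (4 * n : ℝ) ^ (-β) := by
  obtain ⟨hx₀, hx₁⟩ := hx
  have : 0 ≤ 1 - x := sub_nonneg.2 hx₁
  have hquarter : x * (1 - x) / n ≤ (4 * n : ℝ)⁻¹ := by
    rw [mul_inv, ← div_eq_mul_inv]
    gcongr
    nlinarith [sq_nonneg (2 * x - 1)]
  calc (x * (1 - x) / n) ^ β ≤ (4 * n : ℝ)⁻¹ ^ β := by gcongr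
    _ = (4 * n : ℝ) ^ (-β) := by rw [Real.inv_rpow (by positivity), Real.rpow_neg (by positivity)]

/-- Bernstein approximation of an `α`-Hölder function:
`|f(x) - B_n f(x)| ≤ 2 L (x(1-x)/n)^{α/2}`, and in particular
the uniform bound `2 L (4n)^{-α/2}`. -/
theorem bernstein_holder_bound (f : ℝ → ℝ) (α L : ℝ) (hα0 : 0 < α) (hα1 : α ≤ 1)
    (hL : 0 ≤ L)
    (hf : ∀ s ∈ Set.Icc (0:ℝ) 1, ∀ t ∈ Set.Icc (0:ℝ) 1, |f s - f t| ≤ L * |s - t| ^ α)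
    (n : ℕ) (hn : 1 ≤ n) :
    (∀ x ∈ Set.Icc (0:ℝ) 1,
      |f x - ∑ k ∈ Finset.range (n + 1),
          f ((k : ℝ) / n) * (n.choose k : ℝ) * x ^ k * (1 - x) ^ (n - k)|
        ≤ 2 * L * (x * (1 - x) / n) ^ (α / 2)) ∧
    (∀ x ∈ Set.Icc (0:ℝ) 1,
      |f x - ∑ k ∈ Finset.range (n + 1),
          f ((k : ℝ) / n) * (n.choose k : ℝ) * x ^ k * (1 - x) ^ (n - k)|
        ≤ 2 * L * ((4 * (n : ℝ)) ^ (-(α / 2)))) := by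
  have hn₀ : n ≠ 0 := Nat.one_le_iff_ne_zero.1 hn
  have pointwise : ∀ x ∈ Set.Icc (0:ℝ) 1,
      |f x - ∑ k ∈ Finset.range (n + 1),
          f ((k : ℝ) / n) * (n.choose k : ℝ) * x ^ k * (1 - x) ^ (n - k)|
        ≤ L * (x * (1 - x) / n) ^ (α / 2) := fun x hx => by
    simpa only [bernsteinPolynomial, eval_mul, eval_pow, eval_sub, eval_one, eval_X, eval_natCast,
      mul_assoc] using
      abs_sub_sum_mul_eval_bernsteinPolynomial_le hα0.le (by linarith) hL hf hn₀ hx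
  have hβ : 0 ≤ α / 2 := by positivity
  refine ⟨fun x hx => (pointwise x hx).trans ?_, fun x hx => (pointwise x hx).trans ?_⟩
  · have hV : 0 ≤ L * (x * (1 - x) / n) ^ (α / 2) :=
      mul_nonneg hL (Real.rpow_nonneg
        (div_nonneg (mul_nonneg hx.1 (sub_nonneg.2 hx.2)) n.cast_nonneg) _)
    linarith
  · calc L * (x * (1 - x) / n) ^ (α / 2) ≤ L * (4 * n : ℝ) ^ (-(α / 2)) := by
          gcongr; exact mul_one_sub_div_rpow_le hx hn₀ hβ
      _ ≤ 2 * L * (4 * n : ℝ) ^ (-(α / 2)) := by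
          have := Real.rpow_nonneg (by positivity : (0 : ℝ) ≤ 4 * n) (-(α / 2))
          linarith [mul_nonneg hL this]
end
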